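/- arXiv:1507.02103 — 2 statements merged into one kernel-verified Lean document; each statement's English description precedes it below -/
import Mathlib

section
/- Independence of disconnected parts: let (N,A) and (N,A') be two networks and N¹, N² a partition of N (N¹ ∪ N² = N, N¹ ∩ N² = ∅) such that a_{ik} = 0 and a'_{ik} = 0 for all i ∈ N¹ and k ∈ N² (no edges between the two parts in either network), and a_{ij} = a'_{ij} for all i, j ∈ N¹. Then for every ε > 0, x_i(ε)(N,A) = x_i(ε)(N,A') for all i ∈ N¹, and ∑_{i ∈ N¹} x_i(ε)(N,A) = ∑_{i ∈ N¹} x_i(ε)(N,A') = ∑_{i ∈ N¹} d_i. -/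
open Matrix Filter

/-- A network on `n` nodes: a symmetric, loopless 0-1 adjacency matrix. -/
def IsNetwork {n : ℕ} (A : Matrix (Fin n) (Fin n) ℝ) : Prop :=
  (∀ i j, A i j = A j i) ∧ (∀ i, A i i = 0) ∧ (∀ i j, A i j = 0 ∨ A i j = 1)

/-- Degree of node `i`: the `i`-th entry of `A · e`. -/
def deg {n : ℕ} (A : Matrix (Fin n) (Fin n) ℝ) (i : Fin n) : ℝ :=
  ∑ j, A i j

/-- The Laplacian matrix of the network: `ℓ_{ii} = d_i`, `ℓ_{ij} = -a_{ij}` for `i ≠ j`. -/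
def lap {n : ℕ} (A : Matrix (Fin n) (Fin n) ℝ) : Matrix (Fin n) (Fin n) ℝ :=
  Matrix.diagonal (deg A) - A

lemma quad_form (n : ℕ) (A : Matrix (Fin n) (Fin n) ℝ) (z : Fin n → ℝ) :
    z ⬝ᵥ (lap A).mulVec z = ∑ i, ∑ j, A i j * z i * (z i - z j) := by
  simp only [dotProduct, mulVec, lap, Matrix.sub_apply, Matrix.diagonal_apply, deg]
  refine Finset.sum_congr rfl fun i _ => ?_
  simp only [sub_mul]
  rw [Finset.sum_sub_distrib]
  have h0 : ∑ j, (if i = j then ∑ k, A i k else 0) * z j = (∑ k, A i k) * z i := by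
    simp
  rw [h0, mul_sub, Finset.sum_mul, Finset.mul_sum, Finset.mul_sum]
  rw [← Finset.sum_sub_distrib]
  refine Finset.sum_congr rfl fun j _ => ?_
  ring

lemma quad_nonneg {n : ℕ} {A : Matrix (Fin n) (Fin n) ℝ} (hA : IsNetwork A)
    (z : Fin n → ℝ) : 0 ≤ z ⬝ᵥ (lap A).mulVec z := by
  have h := quad_form n A z
  have hswap : z ⬝ᵥ (lap A).mulVec z = ∑ i, ∑ j, A i j * z j * (z j - z i) := by
    rw [h, Finset.sum_comm]
    exact Finset.sum_congr rfl fun j _ => Finset.sum_congr rfl fun i _ => by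
      rw [hA.1 i j]
  have h2 : 2 * (z ⬝ᵥ (lap A).mulVec z) = ∑ i, ∑ j, A i j * (z i - z j) ^ 2 := by
    rw [two_mul]
    nth_rewrite 1 [h]
    rw [hswap, ← Finset.sum_add_distrib]
    refine Finset.sum_congr rfl fun i _ => ?_
    rw [← Finset.sum_add_distrib]
    exact Finset.sum_congr rfl fun j _ => by ring
  have hterm : 0 ≤ ∑ i, ∑ j, A i j * (z i - z j) ^ 2 := by
    refine Finset.sum_nonneg fun i _ => Finset.sum_nonneg fun j _ => ?_
    have hAij : (0:ℝ) ≤ A i j := by rcases hA.2.2 i j with h | h <;> rw [h] <;> norm_num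
    exact mul_nonneg hAij (sq_nonneg _)
  linarith

lemma ker_trivial {n : ℕ} {A : Matrix (Fin n) (Fin n) ℝ} (hA : IsNetwork A)
    {ε : ℝ} (hε : 0 < ε) {z : Fin n → ℝ}
    (hz : ((1 : Matrix (Fin n) (Fin n) ℝ) + ε • lap A).mulVec z = 0) : z = 0 := by
  have h : z ⬝ᵥ ((1 : Matrix (Fin n) (Fin n) ℝ) + ε • lap A).mulVec z = 0 := by
    rw [hz, dotProduct_zero]
  rw [add_mulVec, one_mulVec, smul_mulVec, dotProduct_add, dotProduct_smul,
    smul_eq_mul] at h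
  have h1 : 0 ≤ z ⬝ᵥ z := Finset.sum_nonneg fun i _ => mul_self_nonneg (z i)
  have h2 := quad_nonneg hA z
  have hzz : z ⬝ᵥ z = 0 := by nlinarith
  exact (dotProduct_self_eq_zero).mp hzz

/-- Independence of disconnected parts: if `N¹` is a union of components, identical in
both networks and with no edges to its complement, then generalized degrees on `N¹`
agree in the two networks and sum to the total degree of `N¹`. -/
theorem generalizedDegree_independence_of_disconnected_parts
    {n : ℕ} (A A' : Matrix (Fin n) (Fin n) ℝ)
    (hA : IsNetwork A) (hA' : IsNetwork A')
    (N₁ : Finset (Fin n))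
    (hcut : ∀ i ∈ N₁, ∀ k ∉ N₁, A i k = 0 ∧ A' i k = 0)
    (hsame : ∀ i ∈ N₁, ∀ j ∈ N₁, A i j = A' i j)
    (ε : ℝ) (hε : 0 < ε) (x x' : Fin n → ℝ)
    (hx : ((1 : Matrix (Fin n) (Fin n) ℝ) + ε • lap A).mulVec x = deg A)
    (hx' : ((1 : Matrix (Fin n) (Fin n) ℝ) + ε • lap A').mulVec x' = deg A') :
    (∀ i ∈ N₁, x i = x' i) ∧
      (∑ i ∈ N₁, x i = ∑ i ∈ N₁, x' i ∧ ∑ i ∈ N₁, x i = ∑ i ∈ N₁, deg A i) := by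
  set M := (1 : Matrix (Fin n) (Fin n) ℝ) + ε • lap A with hM
  set M' := (1 : Matrix (Fin n) (Fin n) ℝ) + ε • lap A' with hM'
  -- degrees agree on N₁
  have hdeg : ∀ i ∈ N₁, deg A i = deg A' i := by
    intro i hi
    refine Finset.sum_congr rfl fun j _ => ?_
    by_cases hj : j ∈ N₁
    · exact hsame i hi j hj
    · rw [(hcut i hi j hj).1, (hcut i hi j hj).2]
  -- entries of M
  have hMapp : ∀ i j, M i j = (1 : Matrix (Fin n) (Fin n) ℝ) i j + ε * lap A i j := by
    intro i j; rw [hM]; simp [Matrix.add_apply]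
  have hM'app : ∀ i j, M' i j = (1 : Matrix (Fin n) (Fin n) ℝ) i j + ε * lap A' i j := by
    intro i j; rw [hM']; simp [Matrix.add_apply]
  have hM0 : ∀ i ∈ N₁, ∀ j ∉ N₁, M i j = 0 := by
    intro i hi j hj
    have hij : i ≠ j := fun h => hj (h ▸ hi)
    rw [hMapp, Matrix.one_apply_ne hij, lap, Matrix.sub_apply,
      Matrix.diagonal_apply_ne _ hij, (hcut i hi j hj).1]
    ring
  have hM0' : ∀ i ∈ N₁, ∀ j ∉ N₁, M' i j = 0 := by
    intro i hi j hj
    have hij : i ≠ j := fun h => hj (h ▸ hi)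
    rw [hM'app, Matrix.one_apply_ne hij, lap, Matrix.sub_apply,
      Matrix.diagonal_apply_ne _ hij, (hcut i hi j hj).2]
    ring
  have hM0c : ∀ i ∉ N₁, ∀ j ∈ N₁, M i j = 0 := by
    intro i hi j hj
    have hij : i ≠ j := fun h => hi (h ▸ hj)
    have hAij : A i j = 0 := by rw [hA.1 i j]; exact (hcut j hj i hi).1
    rw [hMapp, Matrix.one_apply_ne hij, lap, Matrix.sub_apply,
      Matrix.diagonal_apply_ne _ hij, hAij]
    ring
  have hMsame : ∀ i ∈ N₁, ∀ j ∈ N₁, M i j = M' i j := by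
    intro i hi j hj
    rw [hMapp, hM'app, lap, lap, Matrix.sub_apply, Matrix.sub_apply, hsame i hi j hj]
    by_cases hij : i = j
    · subst hij; rw [Matrix.diagonal_apply_eq, Matrix.diagonal_apply_eq, hdeg i hi]
    · rw [Matrix.diagonal_apply_ne _ hij, Matrix.diagonal_apply_ne _ hij]
  -- the difference vector supported on N₁ is in the kernel of M
  set z : Fin n → ℝ := fun j => if j ∈ N₁ then x j - x' j else 0 with hzdef
  have hzker : M.mulVec z = 0 := by
    funext i
    show ∑ j, M i j * z j = 0
    by_cases hi : i ∈ N₁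
    · have e1 : ∑ j, M i j * x j = deg A i := congrFun hx i
      have e2 : ∑ j, M' i j * x' j = deg A' i := congrFun hx' i
      have e3 : ∑ j, M i j * x' j = deg A' i := by
        rw [← e2]
        refine Finset.sum_congr rfl fun j _ => ?_
        by_cases hj : j ∈ N₁
        · rw [hMsame i hi j hj]
        · rw [hM0 i hi j hj, hM0' i hi j hj]
      have e4 : ∑ j, M i j * z j = ∑ j, (M i j * x j - M i j * x' j) := by
        refine Finset.sum_congr rfl fun j _ => ?_
        by_cases hj : j ∈ N₁
        · rw [hzdef]; simp only [if_pos hj]; ring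
        · rw [hzdef]; simp only [if_neg hj, hM0 i hi j hj]; ring
      rw [e4, Finset.sum_sub_distrib, e1, e3, hdeg i hi, sub_self]
    · refine Finset.sum_eq_zero fun j _ => ?_
      by_cases hj : j ∈ N₁
      · rw [hM0c i hi j hj, zero_mul]
      · rw [hzdef]; simp only [if_neg hj, mul_zero]
  have hz0 : z = 0 := ker_trivial hA hε hzker
  have hpt : ∀ i ∈ N₁, x i = x' i := by
    intro i hi
    have := congrFun hz0 i
    rw [hzdef] at this
    simp only [if_pos hi, Pi.zero_apply] at this
    linarith
  -- column sums of the Laplacian over N₁ vanish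
  have hcol : ∀ j, ∑ i ∈ N₁, lap A i j = 0 := by
    intro j
    by_cases hj : j ∈ N₁
    · simp only [lap, Matrix.sub_apply]
      rw [Finset.sum_sub_distrib]
      have ha : ∑ i ∈ N₁, Matrix.diagonal (deg A) i j = deg A j := by
        simp only [Matrix.diagonal_apply]
        rw [Finset.sum_ite_eq' N₁ j (deg A), if_pos hj]
      have hb : ∑ i ∈ N₁, A i j = deg A j := by
        have h1 : ∑ i ∈ N₁, A i j = ∑ i, A i j := by
          refine Finset.sum_subset (Finset.subset_univ N₁) fun i _ hi => ?_
          rw [hA.1 i j]; exact (hcut j hj i hi).1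
        rw [h1, deg]
        exact Finset.sum_congr rfl fun i _ => (hA.1 i j).symm ▸ rfl
      rw [ha, hb, sub_self]
    · refine Finset.sum_eq_zero fun i hi => ?_
      have hij : i ≠ j := fun h => hj (h ▸ hi)
      rw [lap, Matrix.sub_apply, Matrix.diagonal_apply_ne _ hij, (hcut i hi j hj).1]
      ring
  have hxi : ∀ i, x i + ε * ((lap A).mulVec x i) = deg A i := by
    intro i
    have := congrFun hx i
    rw [hM, add_mulVec, one_mulVec, smul_mulVec] at this
    simpa using this
  have hS : ∑ i ∈ N₁, (lap A).mulVec x i = 0 := by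
    simp only [mulVec, dotProduct]
    rw [Finset.sum_comm]
    refine Finset.sum_eq_zero fun j _ => ?_
    rw [← Finset.sum_mul, hcol j, zero_mul]
  have hsum : ∑ i ∈ N₁, x i = ∑ i ∈ N₁, deg A i := by
    have h := Finset.sum_congr rfl fun i (_ : i ∈ N₁) => hxi i
    rw [Finset.sum_add_distrib, ← Finset.mul_sum, hS, mul_zero, add_zero] at h
    exact h
  exact ⟨hpt, Finset.sum_congr rfl hpt, hsum⟩
end

section
/- Neumann series decomposition of generalized degree: let (N,A) be a network on n ≥ 1 nodes with maximal degree 𝔡 = max{d_i : i ∈ N}, let C = 𝔡·I − L (so c_{ij} = a_{ij} for i ≠ j and c_{ii} = 𝔡 − d_i), and for ε > 0 let β = ε/(1 + ε𝔡). Then the series ∑_{k=0}^∞ (βC)^k d converges and x(ε) = (1 − β𝔡) · ∑_{k=0}^∞ (βC)^k d. -/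
open Matrix Filter

namespace Matrix

section LinftyOp

attribute [local instance] Matrix.linftyOpNormedAddCommGroup Matrix.linftyOpNormedRing

theorem linfty_opNorm_lt_of_rowSum_norm_lt {m n α : Type*} [Fintype m] [Fintype n]
    [NormedAddCommGroup α] {M : Matrix m n α} {r : ℝ}
    (hr : 0 < r) (h : ∀ i, ∑ j, ‖M i j‖ < r) : ‖M‖ < r := by
  lift r to NNReal using hr.le
  rw [linfty_opNorm_def, NNReal.coe_lt_coe, Finset.sup_lt_iff (mod_cast hr)]
  intro i _
  rw [← NNReal.coe_lt_coe, NNReal.coe_sum]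
  exact h i

variable {n α : Type*} [Fintype n] [DecidableEq n] [NormedRing α] [CompleteSpace α]

theorem hasSum_pow_mulVec_of_rowSum_norm_lt_one {M : Matrix n n α}
    (h : ∀ i, ∑ j, ‖M i j‖ < 1) {x v : n → α} (hx : (1 - M) *ᵥ x = v) :
    HasSum (fun k ↦ (M ^ k) *ᵥ v) x := by
  -- The `L∞` uniformity is definitionally the product one, but instance search does not see it.
  have : @CompleteSpace (Matrix n n α) PseudoMetricSpace.toUniformSpace :=
    inferInstanceAs (CompleteSpace (n → n → α))
  have hM : Summable (M ^ ·) :=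
    summable_geometric_of_norm_lt_one (linfty_opNorm_lt_of_rowSum_norm_lt one_pos h)
  have hsum : HasSum (fun k ↦ (M ^ k) *ᵥ v) ((∑' k, M ^ k) *ᵥ v) :=
    hM.hasSum.map (mulVec.addMonoidHomLeft v) (continuous_id.matrix_mulVec continuous_const)
  convert hsum using 1
  rw [← hx, mulVec_mulVec, hM.tsum_pow_mul_one_sub, one_mulVec]

end LinftyOp

theorem one_add_smul_eq_smul_one_sub_smul {n R : Type*} [Fintype n] [DecidableEq n] [Field R]
    (L : Matrix n n R) {ε D : R} (h : 1 + ε * D ≠ 0) :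
    1 + ε • L = (1 + ε * D) • (1 - (ε / (1 + ε * D)) • (D • 1 - L)) := by
  rw [smul_sub, smul_smul, mul_div_cancel₀ _ h]
  module

end Matrix

section Network

variable {n : ℕ} {A : Matrix (Fin n) (Fin n) ℝ}

theorem IsNetwork.nonneg (hA : IsNetwork A) (i j : Fin n) : 0 ≤ A i j := by
  rcases hA.2.2 i j with h | h <;> simp [h]

theorem deg_nonneg (hA : IsNetwork A) (i : Fin n) : 0 ≤ deg A i :=
  Finset.sum_nonneg fun j _ ↦ hA.nonneg i j

theorem deg_le_iSup (A : Matrix (Fin n) (Fin n) ℝ) (i : Fin n) : deg A i ≤ ⨆ i, deg A i :=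
  le_ciSup (Finite.bddAbove_range _) i

theorem smul_one_sub_lap (A : Matrix (Fin n) (Fin n) ℝ) (D : ℝ) :
    D • 1 - lap A = diagonal (fun i ↦ D - deg A i) + A := by
  rw [lap, smul_one_eq_diagonal, ← sub_add, diagonal_sub]

theorem smul_one_sub_lap_nonneg (hA : IsNetwork A) {D : ℝ} (hD : ∀ i, deg A i ≤ D)
    (i j : Fin n) : 0 ≤ (D • 1 - lap A) i j := by
  rw [smul_one_sub_lap, Matrix.add_apply, diagonal_apply]
  have := hA.nonneg i j
  split_ifs
  · linarith [hD i]
  · linarith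

theorem sum_smul_one_sub_lap_apply (A : Matrix (Fin n) (Fin n) ℝ) (D : ℝ) (i : Fin n) :
    ∑ j, (D • 1 - lap A) i j = D := by
  rw [smul_one_sub_lap]
  simp [Finset.sum_add_distrib, diagonal_apply, deg]

end Network

theorem generalizedDegree_neumann_series_general
    {n : ℕ} (A : Matrix (Fin n) (Fin n) ℝ) (hA : IsNetwork A)
    (ε : ℝ) (hε : 0 < ε) (x : Fin n → ℝ)
    (hx : ((1 : Matrix (Fin n) (Fin n) ℝ) + ε • lap A).mulVec x = deg A)
    (D β : ℝ) (hD : D = ⨆ i, deg A i) (hβ : β = ε / (1 + ε * D))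
    (C : Matrix (Fin n) (Fin n) ℝ)
    (hC : C = D • (1 : Matrix (Fin n) (Fin n) ℝ) - lap A) :
    Summable (fun k : ℕ => ((β • C) ^ k).mulVec (deg A)) ∧
      x = (1 - β * D) • ∑' k : ℕ, ((β • C) ^ k).mulVec (deg A) := by
  have hD0 : 0 ≤ D := hD ▸ Real.iSup_nonneg (deg_nonneg hA)
  have hDle : ∀ i, deg A i ≤ D := hD ▸ deg_le_iSup A
  have hpos : 0 < 1 + ε * D := by positivity
  have hβ0 : 0 ≤ β := hβ ▸ by positivity
  have hrow : ∀ i, ∑ j, ‖(β • C) i j‖ < 1 := by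
    intro i
    calc ∑ j, ‖(β • C) i j‖ = β * D := by
          simp_rw [hC, Matrix.smul_apply, smul_eq_mul, norm_mul, Real.norm_of_nonneg hβ0,
            Real.norm_of_nonneg (smul_one_sub_lap_nonneg hA hDle i _), ← Finset.mul_sum,
            sum_smul_one_sub_lap_apply]
      _ < 1 := by rw [hβ, div_mul_eq_mul_div, div_lt_one hpos]; linarith
  have hsolve : (1 - β • C) *ᵥ ((1 + ε * D) • x) = deg A := by
    rwa [mulVec_smul, ← smul_mulVec, hC, hβ, ← one_add_smul_eq_smul_one_sub_smul _ hpos.ne']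
  have hsum := hasSum_pow_mulVec_of_rowSum_norm_lt_one hrow hsolve
  refine ⟨hsum.summable, ?_⟩
  have hscale : (1 - β * D) * (1 + ε * D) = 1 := by
    rw [hβ]
    field_simp
    ring
  rw [hsum.tsum_eq, smul_smul, hscale, one_smul]

/-- Neumann series decomposition of generalized degree: with `C = 𝔡·I − L` and
`β = ε/(1 + ε𝔡)`, the series `∑ₖ (βC)^k d` converges and
`x(ε) = (1 − β𝔡)·∑ₖ (βC)^k d`. -/
theorem generalizedDegree_neumann_series
    {n : ℕ} (hn : 0 < n) (A : Matrix (Fin n) (Fin n) ℝ) (hA : IsNetwork A)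
    (ε : ℝ) (hε : 0 < ε) (x : Fin n → ℝ)
    (hx : ((1 : Matrix (Fin n) (Fin n) ℝ) + ε • lap A).mulVec x = deg A)
    (D β : ℝ) (hD : D = ⨆ i, deg A i) (hβ : β = ε / (1 + ε * D))
    (C : Matrix (Fin n) (Fin n) ℝ)
    (hC : C = D • (1 : Matrix (Fin n) (Fin n) ℝ) - lap A) :
    Summable (fun k : ℕ => ((β • C) ^ k).mulVec (deg A)) ∧
      x = (1 - β * D) • ∑' k : ℕ, ((β • C) ^ k).mulVec (deg A) :=
  generalizedDegree_neumann_series_general A hA ε hε x hx D β hD hβ C hC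
end
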